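/- Let u, v : ℝ³ → ℝ³ be in L⁴(ℝ³)³. Then ∫_{ℝ³} ⟨log(e+|u|²)|u|²u − log(e+|v|²)|v|²v, u − v⟩ dx ≥ 0. -/

import Mathlib

/-!
Writing `Φ(x) = φ(‖x‖) x` with `φ ≥ 0`, Cauchy–Schwarz gives
`⟪Φ a - Φ b, a - b⟫ ≥ (φ(‖a‖) ‖a‖ - φ(‖b‖) ‖b‖) (‖a‖ - ‖b‖)`, which is nonnegative as soon as
`r ↦ φ(r) r` is monotone on `[0, ∞)`. For `φ(r) = log(e + r²) r²` this holds because
`r ↦ log(e + r²)` and `r ↦ r³` are nonnegative and monotone there, so the integrand is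
pointwise nonnegative.
-/

open Real MeasureTheory

theorem log_exp_one_add_sq_nonneg (r : ℝ) : 0 ≤ Real.log (Real.exp 1 + r ^ 2) :=
  Real.log_nonneg (by nlinarith [Real.one_le_exp zero_le_one, sq_nonneg r])

theorem inner_radial_smul_sub_nonneg {E : Type*} [NormedAddCommGroup E] [InnerProductSpace ℝ E]
    {φ : ℝ → ℝ} (hφ : ∀ r, 0 ≤ r → 0 ≤ φ r) (hmono : MonotoneOn (fun r => φ r * r) (Set.Ici 0))
    (a b : E) : 0 ≤ inner ℝ (φ ‖a‖ • a - φ ‖b‖ • b) (a - b) := by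
  have hA := hφ ‖a‖ (norm_nonneg a)
  have hB := hφ ‖b‖ (norm_nonneg b)
  have hexpand : inner ℝ (φ ‖a‖ • a - φ ‖b‖ • b) (a - b)
      = φ ‖a‖ * ‖a‖ ^ 2 + φ ‖b‖ * ‖b‖ ^ 2 - (φ ‖a‖ + φ ‖b‖) * inner ℝ a b := by
    simp only [inner_sub_left, inner_sub_right, real_inner_smul_left,
      real_inner_self_eq_norm_sq, real_inner_comm b a]
    ring
  have hcs : (φ ‖a‖ + φ ‖b‖) * inner ℝ a b ≤ (φ ‖a‖ + φ ‖b‖) * (‖a‖ * ‖b‖) :=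
    mul_le_mul_of_nonneg_left (real_inner_le_norm a b) (add_nonneg hA hB)
  have hradial : 0 ≤ (φ ‖a‖ * ‖a‖ - φ ‖b‖ * ‖b‖) * (‖a‖ - ‖b‖) :=
    (monovaryOn_id_iff.2 hmono).sub_mul_sub_nonneg (norm_nonneg b) (norm_nonneg a)
  rw [hexpand]
  nlinarith

theorem monotoneOn_log_exp_one_add_sq_mul_pow_three :
    MonotoneOn (fun r : ℝ => Real.log (Real.exp 1 + r ^ 2) * r ^ 2 * r) (Set.Ici 0) := by
  have hlog_mono : MonotoneOn (fun r : ℝ => Real.log (Real.exp 1 + r ^ 2)) (Set.Ici 0) :=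
    fun s hs t _ hst => Real.log_le_log (by positivity) (by gcongr)
  have hcube_mono : MonotoneOn (fun r : ℝ => r ^ 3) (Set.Ici 0) :=
    fun s hs _ _ hst => pow_le_pow_left₀ hs hst 3
  convert hlog_mono.mul hcube_mono (fun r _ => log_exp_one_add_sq_nonneg r)
    (fun r hr => pow_nonneg hr 3) using 1
  ext r
  simp only [Pi.mul_apply]
  ring

theorem damping_monotone_integral_general
    (u v : EuclideanSpace ℝ (Fin 3) → EuclideanSpace ℝ (Fin 3)) :
    0 ≤ ∫ x : EuclideanSpace ℝ (Fin 3),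
      (inner ℝ ((Real.log (Real.exp 1 + ‖u x‖ ^ 2) * ‖u x‖ ^ 2) • u x
            - (Real.log (Real.exp 1 + ‖v x‖ ^ 2) * ‖v x‖ ^ 2) • v x)
        (u x - v x) : ℝ) :=
  integral_nonneg fun x =>
    inner_radial_smul_sub_nonneg (φ := fun r => Real.log (Real.exp 1 + r ^ 2) * r ^ 2)
      (fun r _ => mul_nonneg (log_exp_one_add_sq_nonneg r) (sq_nonneg r))
      monotoneOn_log_exp_one_add_sq_mul_pow_three (u x) (v x)

theorem damping_monotone_integral
    (u v : EuclideanSpace ℝ (Fin 3) → EuclideanSpace ℝ (Fin 3))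
    (hu : MemLp u 4 volume) (hv : MemLp v 4 volume) :
    0 ≤ ∫ x : EuclideanSpace ℝ (Fin 3),
      (inner ℝ ((Real.log (Real.exp 1 + ‖u x‖ ^ 2) * ‖u x‖ ^ 2) • u x
            - (Real.log (Real.exp 1 + ‖v x‖ ^ 2) * ‖v x‖ ^ 2) • v x)
        (u x - v x) : ℝ) :=
  damping_monotone_integral_general u v
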